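/- Let K_1 and K_2 be digital cubes in ℤⁿ with axis-parallel edges whose union X = K_1 ∪ K_2 is a wedge (K_1 ∩ K_2 is a single point) and hence c_1-connected. Then the union of the corner sets of K_1 and K_2 is a c_1-freezing set for X. -/

import Mathlib

/-- A κ-path of some length m in S from a to b (consecutive points equal or adjacent). -/
def DigPath {α : Type*} (κ : α → α → Prop) (S : Set α) (a b : α) : Prop :=
  ∃ (m : ℕ) (r : ℕ → α), r 0 = a ∧ r m = b ∧ (∀ k, k ≤ m → r k ∈ S) ∧
    ∀ k, k < m → r k = r (k + 1) ∨ κ (r k) (r (k + 1))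

/-- S is κ-connected: any two points of S are joined by a κ-path in S. -/
def DigConnected {α : Type*} (κ : α → α → Prop) (S : Set α) : Prop :=
  ∀ a ∈ S, ∀ b ∈ S, DigPath κ S a b

/-- (κ,λ)-continuity via the adjacency characterization. -/
def DigCont {α β : Type*} (κ : α → α → Prop) (lam : β → β → Prop)
    (X : Set α) (f : α → β) : Prop :=
  ∀ x ∈ X, ∀ y ∈ X, κ x y → f x = f y ∨ lam (f x) (f y)

/-- A ⊆ X is a freezing set for (X, κ). -/
def FreezingSet {α : Type*} (κ : α → α → Prop) (X A : Set α) : Prop :=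
  A ⊆ X ∧ ∀ g : α → α, (∀ x ∈ X, g x ∈ X) → DigCont κ κ X g →
    (∀ a ∈ A, g a = a) → ∀ x ∈ X, g x = x

/-- The c_u adjacency on ℤⁿ: distinct points differing by exactly 1 in at most u
coordinates and equal in all others. -/
def cAdj (n u : ℕ) (x y : Fin n → ℤ) : Prop :=
  x ≠ y ∧ (∀ i, x i = y i ∨ |x i - y i| = 1) ∧
    (Finset.univ.filter (fun i => x i ≠ y i)).card ≤ u

/-- The boundary of A ⊆ ℤⁿ: points of A that are c_1-adjacent to a point outside A. -/
def Bd (n : ℕ) (A : Set (Fin n → ℤ)) : Set (Fin n → ℤ) :=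
  {x ∈ A | ∃ y, y ∉ A ∧ cAdj n 1 x y}

/-!
A `c₁`-continuous map is `1`-Lipschitz for the `ℓ¹` distance on every cube contained in its
domain, because any two points of a cube are joined inside it by a chain of `c₁`-steps of
length equal to their `ℓ¹` distance. If the map `g` fixes the corners of the cube `[a, b]`
and `x` lies in it, take the corner `c` with `cᵢ = aᵢ` when `xᵢ ≤ (g x)ᵢ` and `cᵢ = bᵢ`
otherwise: then `x` lies on an `ℓ¹`-geodesic from `g x` to `c`, so
`d(g x, x) + d(x, c) ≤ d(g x, c) = d(g x, g c) ≤ d(x, c)`, whence `g x = x`.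
-/

section Corners

variable {ι α : Type*}

def cubeCorners (a b : ι → α) : Set (ι → α) := {c | ∀ j, c j = a j ∨ c j = b j}

lemma cubeCorners_subset_Icc [Preorder α] {a b : ι → α} (hab : a ≤ b) :
    cubeCorners a b ⊆ Set.Icc a b := fun c hc =>
  ⟨fun j => by rcases hc j with h | h <;> simp [h, hab j],
    fun j => by rcases hc j with h | h <;> simp [h, hab j]⟩

end Corners

section L1Dist

variable {ι : Type*} [Fintype ι]

def l1Dist (x y : ι → ℤ) : ℕ := ∑ i, (x i - y i).natAbs

@[simp]
lemma l1Dist_self (x : ι → ℤ) : l1Dist x x = 0 := by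
  simp [l1Dist]

lemma eq_of_l1Dist_eq_zero {x y : ι → ℤ} (h : l1Dist x y = 0) : x = y := by
  funext i
  have := (Finset.sum_eq_zero_iff.1 h) i (Finset.mem_univ i)
  omega

lemma l1Dist_triangle (x y z : ι → ℤ) : l1Dist x z ≤ l1Dist x y + l1Dist y z := by
  rw [l1Dist, l1Dist, l1Dist, ← Finset.sum_add_distrib]
  exact Finset.sum_le_sum fun i _ => by omega

lemma exists_corner_l1Dist_add_le {a b x : ι → ℤ} (hx : x ∈ Set.Icc a b) (y : ι → ℤ) :
    ∃ c ∈ cubeCorners a b, l1Dist y x + l1Dist x c ≤ l1Dist y c := by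
  classical
  refine ⟨fun i => if x i ≤ y i then a i else b i, fun i => by dsimp only; split_ifs <;> simp, ?_⟩
  rw [l1Dist, l1Dist, l1Dist, ← Finset.sum_add_distrib]
  refine Finset.sum_le_sum fun i _ => ?_
  have hai : a i ≤ x i := hx.1 i
  have hib : x i ≤ b i := hx.2 i
  split_ifs <;> omega

end L1Dist

lemma l1Dist_le_one_of_cAdj {n : ℕ} {x y : Fin n → ℤ} (h : cAdj n 1 x y) : l1Dist x y ≤ 1 := by
  obtain ⟨-, hstep, hcard⟩ := h
  calc l1Dist x y = ∑ i ∈ Finset.univ.filter (fun i => x i ≠ y i), (x i - y i).natAbs :=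
        (Finset.sum_filter_of_ne fun i _ hne => by omega).symm
    _ ≤ (Finset.univ.filter (fun i => x i ≠ y i)).card • 1 :=
        Finset.sum_le_card_nsmul _ _ _ fun i hi => by
          have := (Finset.mem_filter.1 hi).2
          rcases hstep i with h | h
          · omega
          · rw [Int.abs_eq_natAbs] at h; omega
    _ ≤ 1 := by simpa using hcard

lemma exists_cAdj_l1Dist_succ_eq {n : ℕ} {a b x z : Fin n → ℤ} (hx : x ∈ Set.Icc a b)
    (hz : z ∈ Set.Icc a b) (hxz : x ≠ z) :
    ∃ x' ∈ Set.Icc a b, cAdj n 1 x x' ∧ l1Dist x' z + 1 = l1Dist x z := by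
  obtain ⟨j, hj⟩ := Function.ne_iff.1 hxz
  obtain ⟨x', hx'_ne, hx'_j⟩ : ∃ x' : Fin n → ℤ,
      (∀ i ≠ j, x' i = x i) ∧ x' j = if x j < z j then x j + 1 else x j - 1 :=
    ⟨Function.update x j _, fun i hi => Function.update_of_ne hi _ x, Function.update_self j _ x⟩
  -- the ascriptions unfold the pointwise order on `Fin n → ℤ`, which `omega` cannot see through
  refine ⟨x', ⟨fun i => (?_ : a i ≤ x' i), fun i => (?_ : x' i ≤ b i)⟩,
    ⟨fun h => ?_, fun i => ?_, ?_⟩, ?_⟩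
  · have hxi : a i ≤ x i := hx.1 i
    have hzi : a i ≤ z i := hz.1 i
    by_cases hij : i = j
    · subst hij; split_ifs at hx'_j <;> omega
    · rw [hx'_ne i hij]; exact hx.1 i
  · have hxi : x i ≤ b i := hx.2 i
    have hzi : z i ≤ b i := hz.2 i
    by_cases hij : i = j
    · subst hij; split_ifs at hx'_j <;> omega
    · rw [hx'_ne i hij]; exact hx.2 i
  · have := congrFun h j
    split_ifs at hx'_j <;> omega
  · by_cases hij : i = j
    · subst hij; right; rw [Int.abs_eq_natAbs]; split_ifs at hx'_j <;> omega
    · exact Or.inl (hx'_ne i hij).symm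
  · calc (Finset.univ.filter fun i => x i ≠ x' i).card ≤ ({j} : Finset (Fin n)).card :=
          Finset.card_le_card fun i hi => by
            by_contra hij
            exact (Finset.mem_filter.1 hi).2 (hx'_ne i (by simpa using hij)).symm
      _ = 1 := Finset.card_singleton j
  · rw [l1Dist, l1Dist, ← Finset.add_sum_erase _ _ (Finset.mem_univ j),
      ← Finset.add_sum_erase _ _ (Finset.mem_univ j),
      Finset.sum_congr rfl fun i hi => by rw [hx'_ne i (Finset.ne_of_mem_erase hi)]]
    split_ifs at hx'_j <;> omega

lemma l1Dist_map_le_of_digCont {n : ℕ} {X : Set (Fin n → ℤ)} {g : (Fin n → ℤ) → Fin n → ℤ}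
    (hg : DigCont (cAdj n 1) (cAdj n 1) X g) {a b : Fin n → ℤ} (hX : Set.Icc a b ⊆ X)
    {x z : Fin n → ℤ} (hx : x ∈ Set.Icc a b) (hz : z ∈ Set.Icc a b) :
    l1Dist (g x) (g z) ≤ l1Dist x z := by
  induction hm : l1Dist x z generalizing x with
  | zero => rw [eq_of_l1Dist_eq_zero hm, l1Dist_self]
  | succ m ih =>
    have hxz : x ≠ z := by rintro rfl; simp at hm
    obtain ⟨x', hx', hadj, hd⟩ := exists_cAdj_l1Dist_succ_eq hx hz hxz
    have hstep : l1Dist (g x) (g x') ≤ 1 := by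
      rcases hg x (hX hx) x' (hX hx') hadj with h | h
      · simp [h]
      · exact l1Dist_le_one_of_cAdj h
    calc l1Dist (g x) (g z) ≤ l1Dist (g x) (g x') + l1Dist (g x') (g z) := l1Dist_triangle _ _ _
      _ ≤ 1 + m := add_le_add hstep (ih hx' (by omega))
      _ = m + 1 := add_comm 1 m

lemma eq_self_of_digCont_of_fixes_corners {n : ℕ} {X : Set (Fin n → ℤ)}
    {g : (Fin n → ℤ) → Fin n → ℤ} (hg : DigCont (cAdj n 1) (cAdj n 1) X g) {a b : Fin n → ℤ}
    (hX : Set.Icc a b ⊆ X) (hfix : ∀ c ∈ cubeCorners a b, g c = c)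
    {x : Fin n → ℤ} (hx : x ∈ Set.Icc a b) : g x = x := by
  obtain ⟨c, hc, hsum⟩ := exists_corner_l1Dist_add_le hx (g x)
  have hmap := l1Dist_map_le_of_digCont hg hX hx (cubeCorners_subset_Icc (hx.1.trans hx.2) hc)
  rw [hfix c hc] at hmap
  exact eq_of_l1Dist_eq_zero (by omega)

/-- The wedge of two digital cubes has the union of their corner sets as a
c_1-freezing set. -/
theorem wedge_corners_freezingSet_c1 {n : ℕ} (a₁ b₁ a₂ b₂ : Fin n → ℤ)
    (K₁ K₂ : Set (Fin n → ℤ))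
    (hK₁ : K₁ = {x | ∀ j, a₁ j ≤ x j ∧ x j ≤ b₁ j})
    (hK₂ : K₂ = {x | ∀ j, a₂ j ≤ x j ∧ x j ≤ b₂ j})
    (p : Fin n → ℤ) (hwedge : K₁ ∩ K₂ = {p}) :
    FreezingSet (cAdj n 1) (K₁ ∪ K₂)
      ({x | ∀ j, x j = a₁ j ∨ x j = b₁ j} ∪ {x | ∀ j, x j = a₂ j ∨ x j = b₂ j}) := by
  have hIcc : ∀ a b : Fin n → ℤ, {x | ∀ j, a j ≤ x j ∧ x j ≤ b j} = Set.Icc a b := fun a b => by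
    ext x
    simp [Pi.le_def, forall_and]
  rw [hIcc] at hK₁ hK₂
  subst hK₁ hK₂
  obtain ⟨hp₁, hp₂⟩ : p ∈ Set.Icc a₁ b₁ ∩ Set.Icc a₂ b₂ := hwedge ▸ rfl
  refine ⟨Set.union_subset_union (cubeCorners_subset_Icc (hp₁.1.trans hp₁.2))
    (cubeCorners_subset_Icc (hp₂.1.trans hp₂.2)), fun g _ hg hfix x hx => ?_⟩
  rcases hx with hx | hx
  · exact eq_self_of_digCont_of_fixes_corners hg Set.subset_union_left
      (fun c hc => hfix c (Or.inl hc)) hx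
  · exact eq_self_of_digCont_of_fixes_corners hg Set.subset_union_right
      (fun c hc => hfix c (Or.inr hc)) hx
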